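/- For ℓ ≥ 1 and λ < λ₁, with Ψ(t) = exp(-√(1+(λ₁-λ)|t|²))·|t|^{-(ℓ-1)/2}, there exists R > 0 such that for all |t| ≥ R, -ΔΨ(t) + (λ₁-λ)Ψ(t) ≥ (1/2)·exp(-√(1+(λ₁-λ)|t|²))·|t|^{-(ℓ+3)/2}. -/

import Mathlib

/-!
Write Ψ(t) = g(|t|²) with g(s) = exp(-√(1 + c s)) s^a, c = λ₁ - λ, a = -(ℓ-1)/4. For a function
of s = |t|² one has Δ = 4 s g'' + 2 ℓ g', and since g' = g φ with φ = a/s - c/(2√(1 + c s)),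
also g'' = g (φ² + φ'). Expanding gives the exact identity
-ΔΨ + cΨ = Ψ (c/θ + c/θ^{3/2} + (ℓ-1)(ℓ-3)/(4|t|²)), θ = 1 + c|t|².
Once c|t|² ≥ 3 the first term is at least 3/(4|t|²), and (ℓ-1)(ℓ-3) ≥ -1, so the bracket
is at least 1/(2|t|²).
-/

noncomputable def laplacian {ℓ : ℕ} (f : EuclideanSpace ℝ (Fin ℓ) → ℝ)
    (t : EuclideanSpace ℝ (Fin ℓ)) : ℝ :=
  ∑ i, fderiv ℝ (fun x => fderiv ℝ f x (EuclideanSpace.single i 1)) t (EuclideanSpace.single i 1)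

open Real Filter Topology
open scoped RealInnerProductSpace

section RadialFunction

variable {F : Type*} [NormedAddCommGroup F] [InnerProductSpace ℝ F] {g g' g'' : ℝ → ℝ}

lemma hasFDerivAt_comp_norm_sq {x : F} (hg : HasDerivAt g (g' (‖x‖ ^ 2)) (‖x‖ ^ 2)) :
    HasFDerivAt (fun y : F => g (‖y‖ ^ 2)) (g' (‖x‖ ^ 2) • 2 • innerSL ℝ x) x :=
  hg.comp_hasFDerivAt x (hasStrictFDerivAt_norm_sq x).hasFDerivAt

lemma fderiv_fderiv_comp_norm_sq_apply (hg : ∀ s, 0 < s → HasDerivAt g (g' s) s)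
    (hg' : ∀ s, 0 < s → HasDerivAt g' (g'' s) s) {t : F} (ht : t ≠ 0) (v : F) :
    fderiv ℝ (fun x => fderiv ℝ (fun y => g (‖y‖ ^ 2)) x v) t v
      = 4 * g'' (‖t‖ ^ 2) * ⟪t, v⟫ ^ 2 + 2 * g' (‖t‖ ^ 2) * ‖v‖ ^ 2 := by
  have hfirst : (fun x => fderiv ℝ (fun y => g (‖y‖ ^ 2)) x v)
      =ᶠ[𝓝 t] fun x => 2 * g' (‖x‖ ^ 2) * ⟪v, x⟫ := by
    filter_upwards [eventually_ne_nhds ht] with x hx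
    rw [(hasFDerivAt_comp_norm_sq (hg _ (by positivity))).fderiv]
    simp only [smul_apply, coe_innerSL_apply, real_inner_comm, nsmul_eq_mul, Nat.cast_ofNat,
      smul_eq_mul]
    ring
  have hsecond : HasFDerivAt (fun x => 2 * g' (‖x‖ ^ 2) * ⟪v, x⟫)
      ((2 * g' (‖t‖ ^ 2)) • innerSL ℝ v + ⟪v, t⟫ • (2 : ℝ) • g'' (‖t‖ ^ 2) • 2 • innerSL ℝ t) t :=
    ((hasFDerivAt_comp_norm_sq (hg' _ (by positivity))).const_mul 2).fun_mul
      (innerSL ℝ v).hasFDerivAt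
  rw [hfirst.fderiv_eq, hsecond.fderiv]
  simp only [real_inner_comm, add_apply, smul_apply, coe_innerSL_apply,
    inner_self_eq_norm_sq_to_K, ringHom_apply, smul_eq_mul, nsmul_eq_mul, Nat.cast_ofNat]
  ring

end RadialFunction

lemma laplacian_comp_norm_sq {ℓ : ℕ} {g g' g'' : ℝ → ℝ}
    (hg : ∀ s, 0 < s → HasDerivAt g (g' s) s) (hg' : ∀ s, 0 < s → HasDerivAt g' (g'' s) s)
    {t : EuclideanSpace ℝ (Fin ℓ)} (ht : t ≠ 0) :
    laplacian (fun x => g (‖x‖ ^ 2)) t = 4 * ‖t‖ ^ 2 * g'' (‖t‖ ^ 2) + 2 * ℓ * g' (‖t‖ ^ 2) := by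
  simp only [laplacian, fderiv_fderiv_comp_norm_sq_apply hg hg' ht,
    EuclideanSpace.inner_single_right, PiLp.norm_single]
  simp only [EuclideanSpace.norm_sq_eq, norm_eq_abs, sq_abs, ringHom_apply, one_mul, norm_one,
    one_pow, mul_one, Finset.sum_add_distrib, ← Finset.mul_sum, Finset.sum_const,
    Finset.card_univ, Fintype.card_fin, nsmul_eq_mul]
  ring

section RadialProfile

variable {c a s : ℝ}

noncomputable def radialProfile (c a s : ℝ) : ℝ := exp (-√(1 + c * s)) * s ^ a

noncomputable def radialProfileLogDeriv (c a s : ℝ) : ℝ := a / s - c / (2 * √(1 + c * s))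

lemma radialProfile_nonneg (hs : 0 ≤ s) : 0 ≤ radialProfile c a s := by
  unfold radialProfile
  positivity

lemma radialProfile_sq {r : ℝ} (hr : 0 ≤ r) :
    radialProfile c a (r ^ 2) = exp (-√(1 + c * r ^ 2)) * r ^ (2 * a) := by
  rw [radialProfile, ← rpow_natCast, ← rpow_mul hr, Nat.cast_ofNat]

lemma hasDerivAt_sqrt_one_add_mul (hc : 0 ≤ c) (hs : 0 < s) :
    HasDerivAt (fun s => √(1 + c * s)) (c / (2 * √(1 + c * s))) s :=
  (((hasDerivAt_id s).const_mul c).const_add 1).sqrt (by positivity) |>.congr_deriv (by simp)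

lemma hasDerivAt_radialProfile (hc : 0 ≤ c) (hs : 0 < s) :
    HasDerivAt (radialProfile c a) (radialProfile c a s * radialProfileLogDeriv c a s) s := by
  have := ((hasDerivAt_sqrt_one_add_mul hc hs).fun_neg.exp).fun_mul
    (hasDerivAt_rpow_const (p := a) (Or.inl hs.ne'))
  refine this.congr_deriv ?_
  rw [radialProfile, radialProfileLogDeriv, rpow_sub_one hs.ne']
  ring

lemma hasDerivAt_radialProfileLogDeriv (hc : 0 ≤ c) (hs : 0 < s) :
    HasDerivAt (radialProfileLogDeriv c a) (-a / s ^ 2 + c ^ 2 / (4 * √(1 + c * s) ^ 3)) s := by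
  have := ((hasDerivAt_inv hs.ne').const_mul a).sub
    (((hasDerivAt_sqrt_one_add_mul hc hs).const_mul 2).inv (by positivity) |>.const_mul c)
  refine (this.congr_deriv ?_).congr_of_eventuallyEq (.of_forall fun s => ?_)
  · field_simp
    ring
  · simp [radialProfileLogDeriv, div_eq_mul_inv]

lemma hasDerivAt_radialProfile_mul_logDeriv (hc : 0 ≤ c) (hs : 0 < s) :
    HasDerivAt (fun s => radialProfile c a s * radialProfileLogDeriv c a s)
      (radialProfile c a s * (radialProfileLogDeriv c a s ^ 2
        + (-a / s ^ 2 + c ^ 2 / (4 * √(1 + c * s) ^ 3)))) s :=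
  ((hasDerivAt_radialProfile hc hs).mul (hasDerivAt_radialProfileLogDeriv hc hs)).congr_deriv
    (by ring)

end RadialProfile

theorem neg_laplacian_add_mul_radialProfile {ℓ : ℕ} {c : ℝ} (hc : 0 ≤ c)
    {t : EuclideanSpace ℝ (Fin ℓ)} (ht : t ≠ 0) :
    -laplacian (fun x => radialProfile c (-((ℓ - 1) / 4)) (‖x‖ ^ 2)) t
        + c * radialProfile c (-((ℓ - 1) / 4)) (‖t‖ ^ 2)
      = radialProfile c (-((ℓ - 1) / 4)) (‖t‖ ^ 2) * (c / (1 + c * ‖t‖ ^ 2)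
        + c / √(1 + c * ‖t‖ ^ 2) ^ 3 + (ℓ - 1) * (ℓ - 3) / 4 / ‖t‖ ^ 2) := by
  rw [laplacian_comp_norm_sq (fun _ => hasDerivAt_radialProfile hc)
    (fun _ => hasDerivAt_radialProfile_mul_logDeriv hc) ht, radialProfileLogDeriv]
  have hs : 0 < ‖t‖ ^ 2 := by positivity
  set s := ‖t‖ ^ 2
  generalize radialProfile c (-((ℓ - 1) / 4)) s = P
  have hu2 : √(1 + c * s) ^ 2 = 1 + c * s := sq_sqrt (by positivity)
  set u := √(1 + c * s)
  have hu : 0 < u := by positivity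
  have hc' : c = (u ^ 2 - 1) / s := by rw [hu2]; field_simp; ring
  rw [← hu2, hc']
  field_simp
  ring

lemma one_div_two_mul_le_of_three_le_mul {c s : ℝ} (hs : 0 < s) (hcs : 3 ≤ c * s) (m : ℝ) :
    1 / (2 * s) ≤ c / (1 + c * s) + c / √(1 + c * s) ^ 3 + (m - 1) * (m - 3) / 4 / s := by
  have hc : 0 ≤ c := nonneg_of_mul_nonneg_left (by linarith) hs
  have h₁ : 3 / (4 * s) ≤ c / (1 + c * s) := by
    rw [div_le_div_iff₀ (by positivity) (by positivity)]
    nlinarith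
  have h₂ : -1 / 4 / s ≤ (m - 1) * (m - 3) / 4 / s := by
    gcongr
    nlinarith [sq_nonneg (m - 2)]
  have h₃ : 1 / (2 * s) = 3 / (4 * s) + -1 / 4 / s := by field_simp; ring
  have : 0 ≤ c / √(1 + c * s) ^ 3 := by positivity
  linarith

theorem stmt_5_general {ℓ : ℕ} (lam lam₁ : ℝ) (hlt : lam < lam₁)
    (Ψ : EuclideanSpace ℝ (Fin ℓ) → ℝ)
    (hΨ : ∀ t, Ψ t = Real.exp (-Real.sqrt (1 + (lam₁ - lam) * ‖t‖ ^ 2)) *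
      ‖t‖ ^ (-(((ℓ : ℝ) - 1) / 2))) :
    ∃ R > (0 : ℝ), ∀ t : EuclideanSpace ℝ (Fin ℓ), R ≤ ‖t‖ →
      -laplacian Ψ t + (lam₁ - lam) * Ψ t ≥
        (1 / 2) * Real.exp (-Real.sqrt (1 + (lam₁ - lam) * ‖t‖ ^ 2)) *
          ‖t‖ ^ (-(((ℓ : ℝ) + 3) / 2)) := by
  set c := lam₁ - lam
  have hc : 0 < c := sub_pos.2 hlt
  have hΨ_radial : Ψ = fun x => radialProfile c (-((ℓ - 1) / 4)) (‖x‖ ^ 2) := by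
    funext x
    rw [hΨ, radialProfile_sq (norm_nonneg x)]
    ring_nf
  refine ⟨√(3 / c), by positivity, fun t ht => ?_⟩
  have hnorm : 0 < ‖t‖ := (sqrt_pos.2 (by positivity)).trans_le ht
  have hcs : 3 ≤ c * ‖t‖ ^ 2 := by
    rw [← div_le_iff₀' hc]
    exact (sqrt_le_left (by positivity)).1 ht
  have hexp : -(((ℓ : ℝ) + 3) / 2) = 2 * -((ℓ - 1) / 4) - (2 : ℕ) := by push_cast; ring
  rw [hΨ_radial, ge_iff_le, neg_laplacian_add_mul_radialProfile hc.le (norm_pos_iff.1 hnorm)]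
  calc _ = radialProfile c (-((ℓ - 1) / 4)) (‖t‖ ^ 2) * (1 / (2 * ‖t‖ ^ 2)) := by
        rw [radialProfile_sq (norm_nonneg t), hexp, rpow_sub_natCast hnorm.ne']
        ring
    _ ≤ _ := mul_le_mul_of_nonneg_left (one_div_two_mul_le_of_three_le_mul (by positivity) hcs ℓ)
        (radialProfile_nonneg (by positivity))

theorem stmt_5 {ℓ : ℕ} (hℓ : 1 ≤ ℓ) (lam lam₁ : ℝ) (hlt : lam < lam₁)
    (Ψ : EuclideanSpace ℝ (Fin ℓ) → ℝ)
    (hΨ : ∀ t, Ψ t = Real.exp (-Real.sqrt (1 + (lam₁ - lam) * ‖t‖ ^ 2)) *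
      ‖t‖ ^ (-(((ℓ : ℝ) - 1) / 2))) :
    ∃ R > (0 : ℝ), ∀ t : EuclideanSpace ℝ (Fin ℓ), R ≤ ‖t‖ →
      -laplacian Ψ t + (lam₁ - lam) * Ψ t ≥
        (1 / 2) * Real.exp (-Real.sqrt (1 + (lam₁ - lam) * ‖t‖ ^ 2)) *
          ‖t‖ ^ (-(((ℓ : ℝ) + 3) / 2)) :=
  stmt_5_general lam lam₁ hlt Ψ hΨ
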